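/- Let F be a field. Consider two three-term complexes of finite-dimensional F-vector spaces: f : U → V, g : V → W with g ∘ f = 0, and f' : U' → V', g' : V' → W' with g' ∘ f' = 0, together with linear maps α : U → U', β : V → V', γ : W → W' satisfying β ∘ f = f' ∘ α and γ ∘ g = g' ∘ β. Let H(β) : ker g ⧸ range f → ker g' ⧸ range f' be the induced map on homology ([v] ↦ [β(v)]) and let H*(β) : ker f'* ⧸ range g'* → ker f* ⧸ range g* be the induced map on cohomology of the dual complexes ([ψ] ↦ [ψ ∘ β]). Then rank H(β) = rank H*(β), i.e., finrank_F (range H(β)) = finrank_F (range H*(β)). -/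
import Mathlib

open Submodule Module LinearMap

section Aux

variable {F : Type*} [Field F]

lemma aux_ann_finrank {V : Type*} [AddCommGroup V] [Module F V] [FiniteDimensional F V]
    (W : Submodule F V) : finrank F W.dualAnnihilator + finrank F W = finrank F V := by
  rw [← (Subspace.quotEquivAnnihilator W).finrank_eq, Submodule.finrank_quotient_add_finrank]

lemma aux_dualMap_mem {V V' : Type*} [AddCommGroup V] [Module F V]
    [AddCommGroup V'] [Module F V'] (β : V →ₗ[F] V') (K : Submodule F V)
    (ψ : Module.Dual F V') : β.dualMap ψ ∈ K.dualAnnihilator ↔ ψ ∈ (K.map β).dualAnnihilator := by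
  simp [Submodule.mem_dualAnnihilator]

lemma aux_map_mkQ_finrank {V : Type*} [AddCommGroup V] [Module F V] [FiniteDimensional F V]
    (p S : Submodule F V) (h : p ≤ S) :
    finrank F (S.map p.mkQ) + finrank F p = finrank F S := by
  have hr : LinearMap.range (p.mkQ.comp S.subtype) = S.map p.mkQ := by
    rw [LinearMap.range_comp, Submodule.range_subtype]
  have hk : LinearMap.ker (p.mkQ.comp S.subtype) = Submodule.comap S.subtype p := by
    rw [LinearMap.ker_comp, Submodule.ker_mkQ]
  have := LinearMap.finrank_range_add_finrank_ker (p.mkQ.comp S.subtype)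
  rw [hr, hk] at this
  rw [(Submodule.comapSubtypeEquivOfLe h).finrank_eq] at this
  exact this

lemma aux_comap_finrank {V : Type*} [AddCommGroup V] [Module F V]
    (A S' : Submodule F V) (h : S' ≤ A) :
    finrank F (Submodule.comap A.subtype S') = finrank F S' :=
  (Submodule.comapSubtypeEquivOfLe h).finrank_eq

lemma aux_rank_nullity_quot {D M : Type*} [AddCommGroup D] [Module F D]
    [FiniteDimensional F D] [AddCommGroup M] [Module F M]
    (A C : Submodule F D) (hC : C ≤ A)
    (q : ↥A →ₗ[F] M) (hker : LinearMap.ker q = Submodule.comap A.subtype C) :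
    finrank F A = finrank F (LinearMap.range q) + finrank F C := by
  have h := LinearMap.finrank_range_add_finrank_ker q
  rw [hker, aux_comap_finrank A C hC] at h
  exact h.symm

end Aux

/-- The homology at `V` of a three-term complex `U --f--> V --g--> W`:
the quotient `ker g ⧸ range f`, where `range f` is viewed as a submodule of `ker g`. -/
abbrev ThreeTermHomology {F : Type*} [Field F] {U V W : Type*}
    [AddCommGroup U] [Module F U] [AddCommGroup V] [Module F V] [AddCommGroup W] [Module F W]
    (f : U →ₗ[F] V) (g : V →ₗ[F] W) : Type _ :=
  LinearMap.ker g ⧸ Submodule.comap (LinearMap.ker g).subtype (LinearMap.range f)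

set_option maxHeartbeats 2000000 in
set_option synthInstance.maxHeartbeats 400000 in
/-- Given a chain map `(α, β, γ)` between two three-term complexes of finite-dimensional
vector spaces over a field `F`, the induced map `H(β)` on homology (`[v] ↦ [β v]`) and
the induced map `H*(β)` on the cohomology of the dual complexes (`[ψ] ↦ [ψ ∘ β]`) have
equal rank. -/
theorem stmt_6 (F : Type*) [Field F] (U V W U' V' W' : Type*)
    [AddCommGroup U] [Module F U] [FiniteDimensional F U]
    [AddCommGroup V] [Module F V] [FiniteDimensional F V]
    [AddCommGroup W] [Module F W] [FiniteDimensional F W]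
    [AddCommGroup U'] [Module F U'] [FiniteDimensional F U']
    [AddCommGroup V'] [Module F V'] [FiniteDimensional F V']
    [AddCommGroup W'] [Module F W'] [FiniteDimensional F W']
    (f : U →ₗ[F] V) (g : V →ₗ[F] W) (hgf : g.comp f = 0)
    (f' : U' →ₗ[F] V') (g' : V' →ₗ[F] W') (hgf' : g'.comp f' = 0)
    (α : U →ₗ[F] U') (β : V →ₗ[F] V') (γ : W →ₗ[F] W')
    (hsq₁ : β.comp f = f'.comp α) (hsq₂ : γ.comp g = g'.comp β)
    (Hβ : ThreeTermHomology f g →ₗ[F] ThreeTermHomology f' g')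
    (hHβ : ∀ (v : V) (hv : v ∈ LinearMap.ker g) (hv' : β v ∈ LinearMap.ker g'),
      Hβ (Submodule.Quotient.mk ⟨v, hv⟩) = Submodule.Quotient.mk ⟨β v, hv'⟩)
    (Hcoβ : ThreeTermHomology g'.dualMap f'.dualMap →ₗ[F]
      ThreeTermHomology g.dualMap f.dualMap)
    (hHcoβ : ∀ (ψ : Module.Dual F V') (hψ : ψ ∈ LinearMap.ker f'.dualMap)
        (hψ' : ψ.comp β ∈ LinearMap.ker f.dualMap),
      Hcoβ (Submodule.Quotient.mk ⟨ψ, hψ⟩) = Submodule.Quotient.mk ⟨ψ.comp β, hψ'⟩) :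
    Module.finrank F (LinearMap.range Hβ) = Module.finrank F (LinearMap.range Hcoβ) := by
  classical
  set K : Submodule F V := LinearMap.ker g with hK
  set R' : Submodule F V' := LinearMap.range f' with hR'
  set BK : Submodule F V' := K.map β with hBK
  set S : Submodule F V' := BK ⊔ R' with hS
  have hR'S : R' ≤ S := le_sup_right
  -- β maps ker g into ker g'
  have hβK : ∀ v : V, v ∈ K → β v ∈ LinearMap.ker g' := by
    intro v hv
    have h1 : γ (g v) = g' (β v) := LinearMap.congr_fun hsq₂ v
    have h2 : g v = 0 := hv
    simp only [LinearMap.mem_ker]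
    rw [← h1, h2, map_zero]
  -- Homology side
  set p : K →ₗ[F] ThreeTermHomology f' g' := Hβ.comp (Submodule.mkQ _) with hp
  have hrangep : LinearMap.range p = LinearMap.range Hβ := by
    rw [hp, LinearMap.range_comp, Submodule.range_mkQ, Submodule.map_top]
  have hpapp : ∀ x : K, p x = Submodule.Quotient.mk ⟨β x.1, hβK x.1 x.2⟩ := by
    intro x
    have := hHβ x.1 x.2 (hβK x.1 x.2)
    simpa [hp] using this
  set T : K →ₗ[F] V' ⧸ R' := R'.mkQ.comp (β.comp K.subtype) with hT
  have hkerpt : LinearMap.ker p = LinearMap.ker T := by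
    ext x
    simp only [LinearMap.mem_ker, hpapp x, Submodule.Quotient.mk_eq_zero, hT,
      LinearMap.comp_apply, Submodule.mem_comap, Submodule.subtype_apply]
    rw [← Submodule.Quotient.mk_eq_zero, Submodule.mkQ_apply]
  have hrangeT : LinearMap.range T = S.map R'.mkQ := by
    rw [hT, LinearMap.range_comp, LinearMap.range_comp, Submodule.range_subtype, hS,
      Submodule.map_sup, Submodule.mkQ_map_self, sup_bot_eq, hBK]
  have e1 : finrank F K = finrank F (LinearMap.range Hβ) + finrank F (LinearMap.ker p) := by
    rw [← hrangep]; exact (LinearMap.finrank_range_add_finrank_ker p).symm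
  have e2 : finrank F K = finrank F (S.map R'.mkQ) + finrank F (LinearMap.ker p) := by
    rw [← hrangeT, hkerpt]; exact (LinearMap.finrank_range_add_finrank_ker T).symm
  have e3 : finrank F (S.map R'.mkQ) + finrank F R' = finrank F S :=
    aux_map_mkQ_finrank R' S hR'S
  -- Cohomology side
  set A : Submodule F (Module.Dual F V') := LinearMap.ker f'.dualMap with hAdef
  have hA : A = R'.dualAnnihilator := LinearMap.ker_dualMap_eq_dualAnnihilator_range f'
  have hcomp : ∀ ψ : Module.Dual F V', ψ ∈ A → ψ.comp β ∈ LinearMap.ker f.dualMap := by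
    intro ψ hψ
    have hψ0 : f'.dualMap ψ = 0 := hψ
    simp only [LinearMap.mem_ker]
    ext u
    have h1 : β (f u) = f' (α u) := LinearMap.congr_fun hsq₁ u
    have h2 : ψ (f' (α u)) = 0 := by
      have := LinearMap.congr_fun hψ0 (α u)
      simpa using this
    simp [LinearMap.dualMap_apply, h1, h2]
  set q := Hcoβ.comp (Submodule.mkQ _) with hq
  have hrangeq : LinearMap.range q = LinearMap.range Hcoβ := by
    rw [hq]
    exact LinearMap.range_comp_of_range_eq_top Hcoβ (Submodule.range_mkQ _)
  have hqapp : ∀ x : A, q x = Submodule.Quotient.mk ⟨x.1.comp β, hcomp x.1 x.2⟩ := by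
    intro x
    have := hHcoβ x.1 x.2 (hcomp x.1 x.2)
    simpa [hq] using this
  have hkerq : LinearMap.ker q = Submodule.comap A.subtype S.dualAnnihilator := by
    ext x
    simp only [LinearMap.mem_ker, hqapp x, Submodule.Quotient.mk_eq_zero,
      Submodule.mem_comap, Submodule.subtype_apply]
    have hx1 : x.1.comp β = β.dualMap x.1 := rfl
    rw [hx1, LinearMap.range_dualMap_eq_dualAnnihilator_ker g, ← hK,
      aux_dualMap_mem β K x.1, ← hBK, hS, Submodule.dualAnnihilator_sup_eq,
      Submodule.mem_inf]
    have : x.1 ∈ R'.dualAnnihilator := by rw [← hA]; exact x.2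
    tauto
  have hannle : S.dualAnnihilator ≤ A := by
    rw [hA, hS, Submodule.dualAnnihilator_sup_eq]
    exact inf_le_right
  have e4 := aux_rank_nullity_quot A S.dualAnnihilator hannle q hkerq
  rw [hrangeq] at e4
  have e5 : finrank F S.dualAnnihilator + finrank F S = finrank F V' :=
    aux_ann_finrank S
  have e6 : finrank F A + finrank F R' = finrank F V' := by
    rw [hA]; exact aux_ann_finrank R'
  omega
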